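/- arXiv:0709.1556 — 2 statements merged into one kernel-verified Lean document; each statement's English description precedes it below -/
import Mathlib

section
/- Let n be a positive integer, ξ a complex non-real algebraic number of degree greater than n, and suppose t_n(ξ) := max over μ ∈ ℂ* of dim_ℚ V_n(μ,ξ) satisfies t_n(ξ) > (n+1)/2. Then n is even and t_n(ξ) = (n+2)/2. -/
open Polynomial

/-- The ℚ-vector space of polynomials `f ∈ ℚ[X]` of degree at most `n`
with `μ * f(ξ) ∈ ℝ`. -/
noncomputable def Vspace (n : ℕ) (μ ξ : ℂ) : Submodule ℚ ℚ[X] where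
  carrier := {f | f.natDegree ≤ n ∧ ∃ r : ℝ, μ * aeval ξ f = (r : ℂ)}
  zero_mem' := ⟨by simp, 0, by simp⟩
  add_mem' := by
    rintro f g ⟨hf, r, hr⟩ ⟨hg, s, hs⟩
    refine ⟨(natDegree_add_le f g).trans (by simp [hf, hg]), r + s, ?_⟩
    push_cast
    rw [map_add, mul_add, hr, hs]
  smul_mem' := by
    rintro c f ⟨hf, r, hr⟩
    refine ⟨(natDegree_smul_le c f).trans hf, c * r, ?_⟩
    rw [map_smul, Algebra.mul_smul_comm, hr, Rat.smul_def]
    push_cast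
    ring

/-- `t_n(ξ)`: the maximum over nonzero `μ ∈ ℂ` of `dim_ℚ V_n(μ,ξ)`. -/
noncomputable def tdeg (n : ℕ) (ξ : ℂ) : ℕ :=
  sSup {d : ℕ | ∃ μ : ℂ, μ ≠ 0 ∧ d = Module.finrank ℚ (Vspace n μ ξ)}

/-!
If `X * g` and `g` both lie in `V(μ, ξ)`, then `μ g(ξ)` and `ξ · μ g(ξ)` are both real, so
`g(ξ) = 0` because `ξ` is not real, hence `g = 0` as long as `deg g < deg ξ`. Thus
`V_n(μ, ξ)` and `X · V_{n-1}(μ, ξ)` are independent subspaces of the `(n+1)`-dimensional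
space of polynomials of degree `≤ n`, giving `dim V_n + dim V_{n-1} ≤ n + 1`. Together with
`dim V_n ≤ dim V_{n-1} + 1` (one more coefficient) this yields `2 dim V_n ≤ n + 2`, so
`t_n(ξ) > (n+1)/2` forces equality and `n` even.
-/

open Module

theorem Submodule.finrank_add_finrank_le_of_le {K V : Type*} [DivisionRing K] [AddCommGroup V]
    [Module K V] {s t W : Submodule K V} [FiniteDimensional K W] (hs : s ≤ W) (ht : t ≤ W) :
    finrank K s + finrank K t ≤ finrank K W + finrank K (s ⊓ t : Submodule K V) := by
  have := Submodule.finiteDimensional_of_le hs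
  have := Submodule.finiteDimensional_of_le ht
  rw [← Submodule.finrank_sup_add_finrank_inf_eq]
  exact Nat.add_le_add_right (Submodule.finrank_mono (sup_le hs ht)) _

namespace Polynomial

variable {R : Type*}

theorem mem_degreeLT_succ_iff [Semiring R] {n : ℕ} {f : R[X]} :
    f ∈ degreeLT R (n + 1) ↔ f.natDegree ≤ n := by
  rw [degreeLT_succ_eq_degreeLE, mem_degreeLE, natDegree_le_iff_degree_le]

theorem X_mul_mem_degreeLT_succ [Semiring R] [Nontrivial R] {n : ℕ} {f : R[X]}
    (hf : f ∈ degreeLT R n) : X * f ∈ degreeLT R (n + 1) := by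
  rw [mem_degreeLT] at hf ⊢
  rw [(commute_X f).eq, degree_mul_X]
  push_cast
  exact WithBot.add_lt_add_right WithBot.coe_ne_bot hf

theorem finrank_degreeLT [Ring R] [StrongRankCondition R] (n : ℕ) :
    finrank R (degreeLT R n) = n :=
  (finrank_eq_card_basis (degreeLT.basis R n)).trans (Fintype.card_fin n)

end Polynomial

theorem Complex.eq_zero_of_mul_ofReal_eq_ofReal {ξ : ℂ} (hξ : ξ.im ≠ 0) {r s : ℝ}
    (h : ξ * s = r) : s = 0 := by
  simpa [hξ] using congrArg Complex.im h

theorem eq_zero_of_aeval_eq_zero_of_natDegree_lt_minpoly {K A : Type*} [Field K] [Ring A]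
    [Algebra K A] {x : A} {g : K[X]} (h : aeval x g = 0)
    (hg : g.natDegree < (minpoly K x).natDegree) : g = 0 := by
  by_contra hg0
  exact (natDegree_le_of_dvd (minpoly.dvd K x h) hg0).not_gt hg

section Vspace

variable (n : ℕ) (μ ξ : ℂ)

theorem mem_vspace {f : ℚ[X]} :
    f ∈ Vspace n μ ξ ↔ f.natDegree ≤ n ∧ ∃ r : ℝ, μ * aeval ξ f = r :=
  Iff.rfl

theorem vspace_le_degreeLT : Vspace n μ ξ ≤ degreeLT ℚ (n + 1) :=
  fun _ hf => mem_degreeLT_succ_iff.2 hf.1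

instance : FiniteDimensional ℚ (Vspace n μ ξ) :=
  Submodule.finiteDimensional_of_le (vspace_le_degreeLT n μ ξ)

theorem finrank_vspace_le : finrank ℚ (Vspace n μ ξ) ≤ n + 1 :=
  (Submodule.finrank_mono (vspace_le_degreeLT n μ ξ)).trans (finrank_degreeLT (n + 1)).le

theorem vspace_succ_inf_degreeLT : Vspace (n + 1) μ ξ ⊓ degreeLT ℚ (n + 1) = Vspace n μ ξ := by
  ext f
  simp only [Submodule.mem_inf, mem_vspace, mem_degreeLT_succ_iff]
  constructor
  · rintro ⟨⟨-, hr⟩, hf⟩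
    exact ⟨hf, hr⟩
  · rintro ⟨hf, hr⟩
    exact ⟨⟨hf.trans n.le_succ, hr⟩, hf⟩

theorem finrank_vspace_succ_le :
    finrank ℚ (Vspace (n + 1) μ ξ) ≤ finrank ℚ (Vspace n μ ξ) + 1 := by
  have := Submodule.finrank_add_finrank_le_of_le (vspace_le_degreeLT (n + 1) μ ξ)
    (degreeLT_mono (n + 1).le_succ)
  rw [vspace_succ_inf_degreeLT, finrank_degreeLT, finrank_degreeLT] at this
  omega

variable {n μ ξ}

theorem disjoint_vspace_succ_map_mulLeft_X (hξ : ξ.im ≠ 0) (hdeg : n < (minpoly ℚ ξ).natDegree)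
    (hμ : μ ≠ 0) : Disjoint (Vspace (n + 1) μ ξ) ((Vspace n μ ξ).map (LinearMap.mulLeft ℚ X)) := by
  rw [Submodule.disjoint_def]
  rintro _ ⟨-, r, hr⟩ ⟨g, ⟨hg, s, hs⟩, rfl⟩
  have hξs : ξ * s = r := by
    rw [← hs, ← hr, LinearMap.mulLeft_apply, map_mul, aeval_X]
    ring
  have hg0 : aeval ξ g = 0 := by
    simpa [Complex.eq_zero_of_mul_ofReal_eq_ofReal hξ hξs, hμ] using hs
  simp [eq_zero_of_aeval_eq_zero_of_natDegree_lt_minpoly hg0 (hg.trans_lt hdeg)]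

theorem finrank_vspace_succ_add_finrank_vspace_le (hξ : ξ.im ≠ 0)
    (hdeg : n < (minpoly ℚ ξ).natDegree) (hμ : μ ≠ 0) :
    finrank ℚ (Vspace (n + 1) μ ξ) + finrank ℚ (Vspace n μ ξ) ≤ n + 2 := by
  have hX : (Vspace n μ ξ).map (LinearMap.mulLeft ℚ X) ≤ degreeLT ℚ (n + 2) := by
    rintro _ ⟨g, hg, rfl⟩
    exact X_mul_mem_degreeLT_succ (vspace_le_degreeLT n μ ξ hg)
  have := Submodule.finrank_add_finrank_le_of_le (vspace_le_degreeLT (n + 1) μ ξ) hX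
  rwa [(disjoint_vspace_succ_map_mulLeft_X hξ hdeg hμ).eq_bot, finrank_bot, finrank_degreeLT,
    add_zero, ← LinearEquiv.finrank_eq (Submodule.equivMapOfInjective _
      (fun _ _ h => mul_left_cancel₀ X_ne_zero h) _)] at this

theorem two_mul_finrank_vspace_le (hξ : ξ.im ≠ 0) (hdeg : n ≤ (minpoly ℚ ξ).natDegree)
    (hμ : μ ≠ 0) : 2 * finrank ℚ (Vspace n μ ξ) ≤ n + 2 := by
  cases n with
  | zero => linarith [finrank_vspace_le 0 μ ξ]
  | succ m =>
    linarith [finrank_vspace_succ_le m μ ξ, finrank_vspace_succ_add_finrank_vspace_le hξ hdeg hμ]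

end Vspace

theorem two_mul_tdeg_le {n : ℕ} {ξ : ℂ} (hξ : ξ.im ≠ 0) (hdeg : n ≤ (minpoly ℚ ξ).natDegree) :
    2 * tdeg n ξ ≤ n + 2 := by
  suffices tdeg n ξ ≤ (n + 2) / 2 by omega
  refine csSup_le ⟨_, 1, one_ne_zero, rfl⟩ ?_
  rintro _ ⟨μ, hμ, rfl⟩
  have := two_mul_finrank_vspace_le hξ hdeg hμ
  omega

theorem even_and_tdeg_eq_of_large_tdeg_general (n : ℕ) (ξ : ℂ)
    (hξreal : ξ.im ≠ 0)
    (hdeg : n < (minpoly ℚ ξ).natDegree)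
    (ht : n + 1 < 2 * tdeg n ξ) :
    Even n ∧ 2 * tdeg n ξ = n + 2 := by
  have := two_mul_tdeg_le hξreal hdeg.le
  exact ⟨⟨tdeg n ξ - 1, by omega⟩, by omega⟩

theorem even_and_tdeg_eq_of_large_tdeg (n : ℕ) (hn : 0 < n) (ξ : ℂ)
    (hξreal : ξ.im ≠ 0) (hξalg : IsAlgebraic ℚ ξ)
    (hdeg : n < (minpoly ℚ ξ).natDegree)
    (ht : n + 1 < 2 * tdeg n ξ) :
    Even n ∧ 2 * tdeg n ξ = n + 2 :=
  even_and_tdeg_eq_of_large_tdeg_general n ξ hξreal hdeg ht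
end

section
/- Let n be an even positive integer and ξ a complex non-real algebraic number of degree n+2 such that [ℚ(ξ) : ℚ(ξ) ∩ ℝ] = 2. Then t_n(ξ) = (n+2)/2, i.e., there exists μ ∈ ℚ(ξ)* such that the space of rational polynomials f of degree at most n with μ·f(ξ) ∈ ℝ has dimension (n+2)/2. -/
open Polynomial

/-- The subfield of real elements of `ℂ`, as an intermediate field of `ℚ ⊆ ℂ`. -/
noncomputable def realSubfield : IntermediateField ℚ ℂ :=
  Subfield.toIntermediateField Complex.ofRealHom.fieldRange
    (fun x => ⟨(x : ℝ), by simp⟩)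

/-!
Let `K = ℚ(ξ)` and `F = K ∩ ℝ`. Since `n < deg ξ`, evaluation at `ξ` embeds the polynomials of
degree `≤ n` into `K`, with image a hyperplane `W`. If `g ∈ V_n(μ,ξ)` is nonzero, then
`f ↦ f(ξ)/g(ξ)` embeds `V_n(μ,ξ)` into `F`, so `t_n(ξ) ≤ dim F`. Conversely, the map
`a ↦ (z ↦ a z mod W)` from `K` to `Hom(F, K/W)` cannot be injective because
`dim Hom(F, K/W) = dim F < dim K`; a nonzero `a` in its kernel satisfies `aF ⊆ W`, and then
`V_n(a⁻¹,ξ)` contains the preimage of `aF`, of dimension `dim F = (n+2)/2`.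
-/

open IntermediateField Module

section
variable {k A : Type*} [Field k] [Ring A] [Algebra k A]

theorem Polynomial.eq_zero_of_aeval_eq_zero_of_natDegree_lt {x : A} {p : k[X]}
    (hp : aeval x p = 0) (hdeg : p.natDegree < (minpoly k x).natDegree) : p = 0 := by
  by_contra hp0
  have := natDegree_le_natDegree (minpoly.degree_le_of_ne_zero k x hp0 hp)
  omega

theorem Polynomial.aeval_comp_subtype_injective {x : A} {P : Submodule k k[X]}
    (hP : ∀ p ∈ P, p.natDegree < (minpoly k x).natDegree) :
    Function.Injective ((aeval x).toLinearMap ∘ₗ P.subtype) :=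
  (injective_iff_map_eq_zero _).2 fun p hp =>
    Subtype.ext (eq_zero_of_aeval_eq_zero_of_natDegree_lt hp (hP p p.2))

theorem exists_ne_zero_forall_mul_mem [FiniteDimensional k A] {S : Type*} [AddCommGroup S]
    [Module k S] [FiniteDimensional k S] (ι : S →ₗ[k] A) (W : Submodule k A)
    (h : finrank k S * finrank k (A ⧸ W) < finrank k A) :
    ∃ a : A, a ≠ 0 ∧ ∀ s, a * ι s ∈ W := by
  let T : A →ₗ[k] S →ₗ[k] A ⧸ W := ((LinearMap.mul k A).compl₂ ι).compr₂ W.mkQ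
  have hT : LinearMap.ker T ≠ ⊥ := LinearMap.ker_ne_bot_of_finrank_lt (by rwa [finrank_linearMap])
  obtain ⟨a, ha, ha0⟩ := (Submodule.ne_bot_iff _).1 hT
  refine ⟨a, ha0, fun s => ?_⟩
  simpa [T] using LinearMap.congr_fun (LinearMap.mem_ker.1 ha) s

end

theorem finrank_le_finrank_inf_of_injective {k L V : Type*} [Field k] [Field L] [Algebra k L]
    [AddCommGroup V] [Module k V] {K R : IntermediateField k L} [FiniteDimensional k K]
    {μ : L} (hμ : μ ≠ 0) (φ : V →ₗ[k] L) (hφ : Function.Injective φ) (hK : ∀ v, φ v ∈ K)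
    (hR : ∀ v, μ * φ v ∈ R) : finrank k V ≤ finrank k ↥(K ⊓ R) := by
  rcases subsingleton_or_nontrivial V with hV | hV
  · simp [finrank_zero_of_subsingleton]
  obtain ⟨v₀, hv₀⟩ := exists_ne (0 : V)
  have hw₀ : φ v₀ ≠ 0 := by simpa using hφ.ne hv₀
  let ψ : V →ₗ[k] L := LinearMap.mulRight k (φ v₀)⁻¹ ∘ₗ φ
  have hψ : ∀ v, ψ v ∈ (K ⊓ R).toSubmodule := fun v => by
    refine ⟨mul_mem (hK v) (inv_mem (hK v₀)), ?_⟩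
    have : ψ v = μ * φ v * (μ * φ v₀)⁻¹ := by
      simp only [ψ, LinearMap.comp_apply, LinearMap.mulRight_apply]; field_simp
    rw [this]
    exact mul_mem (hR v) (inv_mem (hR v₀))
  exact LinearMap.finrank_le_finrank_of_injective (f := ψ.codRestrict _ hψ)
    fun v w h => hφ (mul_right_cancel₀ (inv_ne_zero hw₀) (congrArg Subtype.val h))

theorem Polynomial.mem_degreeLT_succ_iff_s9 {R : Type*} [CommRing R] {n : ℕ} {p : R[X]} :
    p ∈ degreeLT R (n + 1) ↔ p.natDegree ≤ n := by
  rw [degreeLT_succ_eq_degreeLE, mem_degreeLE, natDegree_le_iff_degree_le]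

theorem Polynomial.finrank_degreeLT_s9 (k : Type*) [Field k] (n : ℕ) :
    finrank k (degreeLT k n) = n := by
  simp [(degreeLTEquiv k n).finrank_eq]

theorem Vspace_le_degreeLT (n : ℕ) (μ ξ : ℂ) : Vspace n μ ξ ≤ degreeLT ℚ (n + 1) :=
  fun _ hf => mem_degreeLT_succ_iff_s9.2 hf.1

instance (n : ℕ) (μ ξ : ℂ) : FiniteDimensional ℚ (Vspace n μ ξ) :=
  haveI := (degreeLTEquiv ℚ (n + 1)).symm.finiteDimensional
  Submodule.finiteDimensional_of_le (Vspace_le_degreeLT n μ ξ)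

theorem finrank_Vspace_le {n : ℕ} {ξ μ : ℂ} (hdeg : n < (minpoly ℚ ξ).natDegree) (hμ : μ ≠ 0)
    [FiniteDimensional ℚ ℚ⟮ξ⟯] :
    finrank ℚ (Vspace n μ ξ) ≤ finrank ℚ ↥(ℚ⟮ξ⟯ ⊓ realSubfield) :=
  finrank_le_finrank_inf_of_injective hμ ((aeval ξ).toLinearMap ∘ₗ (Vspace n μ ξ).subtype)
    (aeval_comp_subtype_injective fun _ hf => hf.1.trans_lt hdeg)
    (fun f => by
      rw [LinearMap.comp_apply, AlgHom.toLinearMap_apply, ← AdjoinSimple.coe_aeval_gen_apply]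
      exact SetLike.coe_mem _)
    (fun f => by
      obtain ⟨r, hr⟩ := f.2.2
      exact ⟨r, hr.symm⟩)

theorem finrank_le_finrank_Vspace {n : ℕ} {ξ a : ℂ} (ha : a ≠ 0) {F : IntermediateField ℚ ℂ}
    [FiniteDimensional ℚ F] (hF : F ≤ realSubfield)
    (h : ∀ z ∈ F, ∃ p : ℚ[X], p.natDegree ≤ n ∧ aeval ξ p = a * z) :
    finrank ℚ F ≤ finrank ℚ (Vspace n a⁻¹ ξ) := by
  have hsub : F.toSubmodule.map (LinearMap.mulLeft ℚ a) ≤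
      (Vspace n a⁻¹ ξ).map (aeval ξ).toLinearMap := by
    rintro _ ⟨z, hz, rfl⟩
    obtain ⟨p, hp, hpz⟩ := h z hz
    obtain ⟨r, hr⟩ := hF hz
    exact ⟨p, ⟨hp, r, by simp [hpz, ha, ← hr]⟩, by simpa using hpz⟩
  calc finrank ℚ F
      = finrank ℚ (F.toSubmodule.map (LinearMap.mulLeft ℚ a)) :=
        (Submodule.equivMapOfInjective _ (mul_right_injective₀ ha) F.toSubmodule).finrank_eq
    _ ≤ finrank ℚ ((Vspace n a⁻¹ ξ).map (aeval ξ).toLinearMap) := Submodule.finrank_mono hsub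
    _ ≤ finrank ℚ (Vspace n a⁻¹ ξ) := Submodule.finrank_map_le _ _

theorem exists_finrank_le_finrank_Vspace {n : ℕ} {ξ : ℂ} (hint : IsIntegral ℚ ξ)
    (hdeg : (minpoly ℚ ξ).natDegree = n + 2)
    (hlt : finrank ℚ ↥(ℚ⟮ξ⟯ ⊓ realSubfield) < n + 2) :
    ∃ a : ℂ, a ≠ 0 ∧ a ∈ ℚ⟮ξ⟯ ∧ finrank ℚ ↥(ℚ⟮ξ⟯ ⊓ realSubfield) ≤ finrank ℚ (Vspace n a⁻¹ ξ) := by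
  have := adjoin.finiteDimensional hint
  let ev := (aeval (AdjoinSimple.gen ℚ ξ)).toLinearMap ∘ₗ (degreeLT ℚ (n + 1)).subtype
  have hev : Function.Injective ev := aeval_comp_subtype_injective fun p hp => by
    -- `ev` sees `ℚ⟮ξ⟯` through `DivisionRing.toRatAlgebra`, equal to its own algebra only up to defeq
    erw [IntermediateField.minpoly_gen ℚ ξ, hdeg]
    exact (mem_degreeLT_succ_iff_s9.1 hp).trans_lt (by omega)
  have hcodim : finrank ℚ (ℚ⟮ξ⟯ ⧸ LinearMap.range ev) = 1 := by
    have := (LinearMap.range ev).finrank_quotient_add_finrank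
    rw [LinearMap.finrank_range_of_inj hev, finrank_degreeLT_s9, adjoin.finrank hint, hdeg] at this
    omega
  obtain ⟨a, ha, hmul⟩ := exists_ne_zero_forall_mul_mem
    (IntermediateField.inclusion (inf_le_left : ℚ⟮ξ⟯ ⊓ realSubfield ≤ ℚ⟮ξ⟯)).toLinearMap
    (LinearMap.range ev) (by rwa [hcodim, mul_one, adjoin.finrank hint, hdeg])
  refine ⟨a, by simpa using ha, a.2, finrank_le_finrank_Vspace (by simpa using ha) inf_le_right
    fun z hz => ?_⟩
  obtain ⟨⟨p, hp⟩, hpz⟩ := hmul ⟨z, hz⟩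
  exact ⟨p, mem_degreeLT_succ_iff_s9.1 hp, by
    rw [← AdjoinSimple.coe_aeval_gen_apply]
    exact congrArg Subtype.val hpz⟩

theorem tdeg_eq_of_forall_le_of_exists_eq {n : ℕ} {ξ : ℂ} {m : ℕ}
    (hle : ∀ μ : ℂ, μ ≠ 0 → finrank ℚ (Vspace n μ ξ) ≤ m)
    (heq : ∃ μ : ℂ, μ ≠ 0 ∧ finrank ℚ (Vspace n μ ξ) = m) : tdeg n ξ = m := by
  refine IsGreatest.csSup_eq ⟨?_, ?_⟩
  · obtain ⟨μ, hμ, h⟩ := heq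
    exact ⟨μ, hμ, h.symm⟩
  · rintro _ ⟨μ, hμ, rfl⟩
    exact hle μ hμ

theorem tdeg_of_degree_n_add_two_and_index_two_general (n : ℕ)
    (ξ : ℂ)
    (hdeg : (minpoly ℚ ξ).natDegree = n + 2)
    (hindex : 2 * Module.finrank ℚ
      (IntermediateField.adjoin ℚ {ξ} ⊓ realSubfield : IntermediateField ℚ ℂ)
      = (minpoly ℚ ξ).natDegree) :
    2 * tdeg n ξ = n + 2 ∧
      ∃ μ : ℂ, μ ≠ 0 ∧ μ ∈ IntermediateField.adjoin ℚ {ξ} ∧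
        2 * Module.finrank ℚ (Vspace n μ ξ) = n + 2 := by
  have hint : IsIntegral ℚ ξ := minpoly.ne_zero_iff.1 fun h => by simp [h] at hdeg
  have := adjoin.finiteDimensional hint
  rw [hdeg] at hindex
  have hupper : ∀ μ : ℂ, μ ≠ 0 → finrank ℚ (Vspace n μ ξ) ≤ finrank ℚ ↥(ℚ⟮ξ⟯ ⊓ realSubfield) :=
    fun μ hμ => finrank_Vspace_le (by omega) hμ
  obtain ⟨a, ha, haK, hlower⟩ := exists_finrank_le_finrank_Vspace hint hdeg (by omega)
  have hV := le_antisymm (hupper _ (inv_ne_zero ha)) hlower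
  rw [tdeg_eq_of_forall_le_of_exists_eq hupper ⟨_, inv_ne_zero ha, hV⟩]
  exact ⟨hindex, a⁻¹, inv_ne_zero ha, inv_mem haK, hV ▸ hindex⟩

theorem tdeg_of_degree_n_add_two_and_index_two (n : ℕ) (hn : 0 < n) (hne : Even n)
    (ξ : ℂ) (hξreal : ξ.im ≠ 0) (hξalg : IsAlgebraic ℚ ξ)
    (hdeg : (minpoly ℚ ξ).natDegree = n + 2)
    (hindex : 2 * Module.finrank ℚ
      (IntermediateField.adjoin ℚ {ξ} ⊓ realSubfield : IntermediateField ℚ ℂ)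
      = (minpoly ℚ ξ).natDegree) :
    2 * tdeg n ξ = n + 2 ∧
      ∃ μ : ℂ, μ ≠ 0 ∧ μ ∈ IntermediateField.adjoin ℚ {ξ} ∧
        2 * Module.finrank ℚ (Vspace n μ ξ) = n + 2 :=
  tdeg_of_degree_n_add_two_and_index_two_general n ξ hdeg hindex
end
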